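/- arXiv:2202.13978 — 3 statements merged into one kernel-verified Lean document; each statement's English description precedes it below -/
import Mathlib

section
/- For every integer n ≥ 1, the polynomial identity R̂_{2n+1}(x) = x(1+x)^{n} · Σ_{j=0}^{n} 2^j (2j+1)! V(n,j) x^j (1−x)^{n−j} holds in ℤ[x]. -/
open Polynomial Finset

/-- Signed permutations of rank `n` are encoded by a pair `(σ, ε)` of a permutation
`σ ∈ S_n` and a sign vector `ε : Fin n → Bool` (`true` meaning a negative sign):
the associated word `0 π(1) π(2) ⋯ π(n)` is given by `π(j) = ±(σ(j) )` where values
of `σ` are taken in `{1,…,n}`.  `sgnWord σ ε j` is the `j`-th letter of this word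
(junk value `0` for `j > n`). -/
def sgnWord {n : ℕ} (σ : Equiv.Perm (Fin n)) (ε : Fin n → Bool) (j : ℕ) : ℤ :=
  if j = 0 then 0
  else if h : j - 1 < n then
    (if ε ⟨j - 1, h⟩ then -(((σ ⟨j - 1, h⟩ : Fin n) : ℕ) + 1 : ℤ)
     else (((σ ⟨j - 1, h⟩ : Fin n) : ℕ) + 1 : ℤ))
  else 0

/-- The number of alternating runs of the signed permutation encoded by `(σ, ε)`:
the number of maximal monotonic intervals of the word `0 π(1) ⋯ π(n)`, which (the
letters being pairwise distinct) is one more than the number of indices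
`i ∈ {1,…,n-1}` where the word changes direction. -/
def sgnAltRuns (n : ℕ) (σ : Equiv.Perm (Fin n)) (ε : Fin n → Bool) : ℕ :=
  1 + ((Finset.Icc 1 (n - 1)).filter (fun i =>
    (sgnWord σ ε (i - 1) < sgnWord σ ε i ∧ sgnWord σ ε (i + 1) < sgnWord σ ε i) ∨
    (sgnWord σ ε i < sgnWord σ ε (i - 1) ∧ sgnWord σ ε i < sgnWord σ ε (i + 1)))).card

/-- The alternating run polynomial `R̂_n(x) = Σ_k R̂(n,k) x^k` of up signed permutations,
i.e. signed permutations with `π(1) > 0`. -/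
noncomputable def RhatPoly (n : ℕ) : Polynomial ℤ :=
  ∑ p ∈ (Finset.univ : Finset (Equiv.Perm (Fin n) × (Fin n → Bool))).filter
      (fun p => 0 < sgnWord p.1 p.2 1),
    Polynomial.X ^ sgnAltRuns n p.1 p.2

/-- The central factorial numbers of odd indices `V(n,k)`, defined by the recurrence
`V(n,k) = V(n-1,k-1) + (2k+1)^2 * V(n-1,k)` with `V(0,0) = 1` and `V(0,k) = 0` for `k ≠ 0`. -/
def V : ℕ → ℕ → ℤ
  | 0, 0 => 1
  | 0, _ + 1 => 0
  | n + 1, 0 => V n 0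
  | n + 1, k + 1 => V n k + (2 * ((k : ℤ) + 1) + 1) ^ 2 * V n (k + 1)

/-! ### Auxiliary definitions -/

/-- Turning point predicate for a word `w`. -/
def turn (w : ℕ → ℤ) (i : ℕ) : Prop :=
  (w (i - 1) < w i ∧ w (i + 1) < w i) ∨ (w i < w (i - 1) ∧ w i < w (i + 1))

instance turn.dec (w : ℕ → ℤ) : DecidablePred (turn w) := fun _ => by
  unfold turn; infer_instance

lemma sgnAltRuns_eq (n : ℕ) (σ : Equiv.Perm (Fin n)) (ε : Fin n → Bool) :
    sgnAltRuns n σ ε = 1 + ((Finset.Icc 1 (n - 1)).filter (turn (sgnWord σ ε))).card := by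
  unfold sgnAltRuns turn
  congr 1

/-- Run polynomial over all signed permutations. -/
noncomputable def QPoly (m : ℕ) : Polynomial ℤ :=
  ∑ p : Equiv.Perm (Fin m) × (Fin m → Bool), (X : ℤ[X]) ^ sgnAltRuns m p.1 p.2

/-- The first-order operator appearing in the run-polynomial recurrence. -/
noncomputable def Lop (m : ℕ) (P : ℤ[X]) : ℤ[X] :=
  (3 * X - 1 + C (2 * (m : ℤ)) * X ^ 2) * P + (2 * X - 2 * X ^ 3) * derivative P

lemma Lop_sum {ι : Type*} (m : ℕ) (s : Finset ι) (f : ι → ℤ[X]) :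
    Lop m (∑ i ∈ s, f i) = ∑ i ∈ s, Lop m (f i) := by
  simp only [Lop, derivative_sum, Finset.mul_sum, ← Finset.sum_add_distrib]

/-- Insertion of the largest value at position `p`. -/
def bigPerm {m : ℕ} (σ : Equiv.Perm (Fin m)) (p : Fin (m + 1)) : Equiv.Perm (Fin (m + 1)) :=
  (finSuccEquiv' p).trans ((σ.optionCongr).trans finSuccEquivLast.symm)

def bigSign {m : ℕ} (ε : Fin m → Bool) (p : Fin (m + 1)) (b : Bool) : Fin (m + 1) → Bool :=
  fun i => ((finSuccEquiv' p) i).elim b ε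

lemma bigPerm_apply_self {m : ℕ} (σ : Equiv.Perm (Fin m)) (p : Fin (m + 1)) :
    bigPerm σ p p = Fin.last m := by
  simp [bigPerm]

lemma bigPerm_apply_succAbove {m : ℕ} (σ : Equiv.Perm (Fin m)) (p : Fin (m + 1)) (i : Fin m) :
    bigPerm σ p (p.succAbove i) = (σ i).castSucc := by
  simp [bigPerm, finSuccEquiv'_succAbove]

lemma bigSign_self {m : ℕ} (ε : Fin m → Bool) (p : Fin (m + 1)) (b : Bool) :
    bigSign ε p b p = b := by simp [bigSign]

lemma bigSign_succAbove {m : ℕ} (ε : Fin m → Bool) (p : Fin (m + 1)) (b : Bool) (i : Fin m) :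
    bigSign ε p b (p.succAbove i) = ε i := by simp [bigSign, finSuccEquiv'_succAbove]

lemma sgnWord_zero {n : ℕ} (σ : Equiv.Perm (Fin n)) (ε : Fin n → Bool) :
    sgnWord σ ε 0 = 0 := rfl

/-- word value lemma below insertion point -/
lemma bigWord_lt {m : ℕ} (σ : Equiv.Perm (Fin m)) (ε : Fin m → Bool) (p : Fin (m + 1))
    (b : Bool) {j : ℕ} (hj : j < (p : ℕ) + 1) :
    sgnWord (bigPerm σ p) (bigSign ε p b) j = sgnWord σ ε j := by
  rcases eq_or_ne j 0 with rfl | hj0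
  · rfl
  have hpm : (p : ℕ) < m + 1 := p.isLt
  have hjm : j - 1 < m := by omega
  have hjm1 : j - 1 < m + 1 := by omega
  have hs : (⟨j - 1, hjm1⟩ : Fin (m + 1)) = p.succAbove ⟨j - 1, hjm⟩ := by
    rw [Fin.succAbove_of_castSucc_lt _ _ (by rw [Fin.lt_def]; simpa using (by omega : j - 1 < (p : ℕ)))]
    rfl
  unfold sgnWord
  rw [if_neg hj0, if_neg hj0, dif_pos hjm1, dif_pos hjm, hs, bigPerm_apply_succAbove,
    bigSign_succAbove]
  simp

lemma bigWord_eq {m : ℕ} (σ : Equiv.Perm (Fin m)) (ε : Fin m → Bool) (p : Fin (m + 1))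
    (b : Bool) :
    sgnWord (bigPerm σ p) (bigSign ε p b) ((p : ℕ) + 1)
      = if b then -((m : ℤ) + 1) else ((m : ℤ) + 1) := by
  have hpm : (p : ℕ) < m + 1 := p.isLt
  unfold sgnWord
  rw [if_neg (by omega), dif_pos (by simpa using hpm : (p : ℕ) + 1 - 1 < m + 1)]
  have hs : (⟨(p : ℕ) + 1 - 1, by simpa using hpm⟩ : Fin (m + 1)) = p := by
    apply Fin.ext; simp
  rw [hs, bigPerm_apply_self, bigSign_self]
  cases b <;> simp

lemma bigWord_gt {m : ℕ} (σ : Equiv.Perm (Fin m)) (ε : Fin m → Bool) (p : Fin (m + 1))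
    (b : Bool) {j : ℕ} (hj : (p : ℕ) + 1 < j) (hjm : j ≤ m + 1) :
    sgnWord (bigPerm σ p) (bigSign ε p b) j = sgnWord σ ε (j - 1) := by
  have hpm : (p : ℕ) < m + 1 := p.isLt
  have hjm1 : j - 1 < m + 1 := by omega
  have hjm2 : j - 2 < m := by omega
  have hs : (⟨j - 1, hjm1⟩ : Fin (m + 1)) = p.succAbove ⟨j - 2, hjm2⟩ := by
    rw [Fin.succAbove_of_le_castSucc _ _ (by rw [Fin.le_def]; simpa using (by omega : (p : ℕ) ≤ j - 2))]
    apply Fin.ext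
    simp [Fin.val_succ]
    omega
  unfold sgnWord
  rw [if_neg (by omega), if_neg (by omega), dif_pos hjm1, dif_pos (by omega : j - 1 - 1 < m)]
  rw [show (⟨j - 1 - 1, by omega⟩ : Fin m) = ⟨j - 2, hjm2⟩ from by apply Fin.ext; simp; omega]
  rw [hs, bigPerm_apply_succAbove, bigSign_succAbove]
  simp

lemma sgnWord_bound {m : ℕ} (σ : Equiv.Perm (Fin m)) (ε : Fin m → Bool) (j : ℕ) :
    -((m : ℤ) + 1) < sgnWord σ ε j ∧ sgnWord σ ε j < (m : ℤ) + 1 := by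
  unfold sgnWord
  split_ifs with h0 h hb
  · constructor <;> omega
  · have := (σ ⟨j - 1, h⟩).isLt
    constructor <;> omega
  · have := (σ ⟨j - 1, h⟩).isLt
    constructor <;> omega
  · constructor <;> omega

lemma sgnWord_one_ne_zero {m : ℕ} (hm : 1 ≤ m) (σ : Equiv.Perm (Fin m)) (ε : Fin m → Bool) :
    sgnWord σ ε 1 ≠ 0 := by
  unfold sgnWord
  rw [if_neg (by omega), dif_pos (by omega : 1 - 1 < m)]
  split_ifs <;> omega

lemma sgnWord_adj_ne {m : ℕ} (σ : Equiv.Perm (Fin m)) (ε : Fin m → Bool) {i : ℕ}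
    (h1 : 1 ≤ i) (h2 : i ≤ m) : sgnWord σ ε (i - 1) ≠ sgnWord σ ε i := by
  rcases eq_or_ne i 1 with rfl | hi1
  · show sgnWord σ ε 0 ≠ sgnWord σ ε 1
    rw [sgnWord_zero]
    exact fun h => sgnWord_one_ne_zero (by omega) σ ε h.symm
  · have hi2 : 2 ≤ i := by omega
    unfold sgnWord
    rw [if_neg (by omega), if_neg (by omega), dif_pos (by omega : i - 1 - 1 < m),
      dif_pos (by omega : i - 1 < m)]
    have hne : (σ ⟨i - 1 - 1, by omega⟩ : ℕ) ≠ (σ ⟨i - 1, by omega⟩ : ℕ) := by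
      intro h
      have := σ.injective (Fin.ext h)
      rw [Fin.mk.injEq] at this
      omega
    split_ifs <;> omega

lemma turn_neg (w : ℕ → ℤ) (i : ℕ) : turn (fun j => -(w j)) i ↔ turn w i := by
  unfold turn
  simp only [neg_lt_neg_iff]
  tauto

lemma turn_congr {w w' : ℕ → ℤ} {i : ℕ} (h1 : w (i - 1) = w' (i - 1)) (h2 : w i = w' i)
    (h3 : w (i + 1) = w' (i + 1)) : turn w i ↔ turn w' i := by
  unfold turn; rw [h1, h2, h3]

lemma turn_peak {u : ℕ → ℤ} {M : ℤ} {i : ℕ} (h1 : u (i - 1) < M) (h2 : u (i + 1) < M)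
    (h : u i = M) : turn u i := by
  unfold turn
  rw [h]
  exact Or.inl ⟨h1, h2⟩

lemma turn_before_max {u : ℕ → ℤ} {M : ℤ} {i : ℕ} (hlt : u i < M) (h : u (i + 1) = M) :
    turn u i ↔ u i < u (i - 1) := by
  unfold turn
  rw [h]
  constructor
  · rintro (⟨_, h2⟩ | ⟨h1, _⟩)
    · linarith
    · exact h1
  · intro hh
    exact Or.inr ⟨hh, hlt⟩

lemma turn_after_max {u : ℕ → ℤ} {M : ℤ} {i : ℕ} (h : u (i - 1) = M) (hlt : u i < M) :
    turn u i ↔ u i < u (i + 1) := by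
  unfold turn
  rw [h]
  constructor
  · rintro (⟨h1, _⟩ | ⟨_, h2⟩)
    · linarith
    · exact h2
  · intro hh
    exact Or.inr ⟨hlt, hh⟩

lemma turn_shift {u w : ℕ → ℤ} {i : ℕ} (hi : 2 ≤ i) (e1 : u (i - 1) = w (i - 2))
    (e2 : u i = w (i - 1)) (e3 : u (i + 1) = w i) : turn u i ↔ turn w (i - 1) := by
  unfold turn
  rw [e1, e2, e3, show i - 1 - 1 = i - 2 from by omega, show i - 1 + 1 = i from by omega]

/-- The core counting lemma: effect of inserting a maximal letter `M` at slot `pp`. -/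
lemma core (m : ℕ) (hm : 1 ≤ m) (pp : ℕ) (hpp1 : 1 ≤ pp) (hpp2 : pp ≤ m + 1)
    (w u : ℕ → ℤ) (M : ℤ)
    (hb : ∀ j, j ≤ m → -M < w j ∧ w j < M)
    (h1 : ∀ j, j < pp → u j = w j)
    (h2 : u pp = M)
    (h3 : ∀ j, pp < j → j ≤ m + 1 → u j = w (j - 1)) :
    ((Icc 1 m).filter (turn u)).card
      + (if 2 ≤ pp ∧ pp ≤ m ∧ turn w (pp - 1) then 1 else 0)
      + (if pp + 1 ≤ m ∧ turn w pp then 1 else 0)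
    = ((Icc 1 (m - 1)).filter (turn w)).card
      + (if pp ≤ m then 1 else 0)
      + (if 2 ≤ pp ∧ w (pp - 1) < w (pp - 2) then 1 else 0)
      + (if pp + 1 ≤ m ∧ w pp < w (pp + 1) then 1 else 0) := by
  have hIcc : ∀ t : ℕ, Finset.Icc 1 t = Finset.Ioc 0 t := fun t => by
    ext x; simp only [Finset.mem_Icc, Finset.mem_Ioc]; omega
  obtain ⟨m', rfl⟩ : ∃ m', m = m' + 1 := ⟨m - 1, by omega⟩
  rw [Finset.card_filter, Finset.card_filter, hIcc, hIcc]
  simp only [Nat.add_sub_cancel]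
  have hbW : ∀ j, j ≤ m' + 1 → w j < M := fun j hj => (hb j hj).2
  have hpeak : pp ≤ m' + 1 → turn u pp := by
    intro hple
    refine turn_peak (M := M) ?_ ?_ h2
    · rw [h1 (pp - 1) (by omega)]; exact hbW _ (by omega)
    · rw [h3 (pp + 1) (by omega) (by omega)]; exact hbW _ (by omega)
  have hlo : ∀ t : ℕ, t + 1 < pp →
      (∑ i ∈ Finset.Ioc 0 t, (if turn u i then 1 else 0))
        = ∑ i ∈ Finset.Ioc 0 t, (if turn w i then 1 else 0) := by
    intro t ht
    refine Finset.sum_congr rfl fun i hi => ?_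
    have hi' := Finset.mem_Ioc.mp hi
    exact if_congr (turn_congr (h1 _ (by omega)) (h1 _ (by omega)) (h1 _ (by omega))) rfl rfl
  have hhi : ∀ a : ℕ, pp ≤ a → a ≤ m' →
      (∑ i ∈ Finset.Ioc (a + 1) (m' + 1), (if turn u i then 1 else 0))
        = ∑ i ∈ Finset.Ioc a m', (if turn w i then 1 else 0) := by
    intro a ha ham
    rw [← Finset.map_add_right_Ioc a m' 1, Finset.sum_map]
    refine Finset.sum_congr rfl fun i hi => ?_
    have hi' := Finset.mem_Ioc.mp hi
    simp only [addRightEmbedding_apply]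
    have hiff : turn u (i + 1) ↔ turn w (i + 1 - 1) := by
      refine turn_shift (by omega) ?_ ?_ ?_
      · rw [show i + 1 - 1 = i from by omega, show i + 1 - 2 = i - 1 from by omega]
        exact h3 i (by omega) (by omega)
      · rw [show i + 1 - 1 = i from by omega]
        exact h3 (i + 1) (by omega) (by omega)
      · have := h3 (i + 1 + 1) (by omega) (by omega)
        rw [this, show i + 1 + 1 - 1 = i + 1 from by omega]
    rw [show i + 1 - 1 = i from by omega] at hiff
    exact if_congr hiff rfl rfl
  rcases Nat.lt_or_ge pp (m' + 2) with hcase | hcase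
  · -- pp ≤ m + 1 is automatic; here pp ≤ m
    have hP1 : pp ≤ m' + 1 := by omega
    rw [if_pos hP1]
    rcases eq_or_ne pp 1 with rfl | hpp_ne1
    · -- pp = 1
      rw [if_neg (fun h => absurd h.1 (by omega) : ¬(2 ≤ 1 ∧ 1 ≤ m' + 1 ∧ turn w (1 - 1)))]
      rw [if_neg (fun h => absurd h.1 (by omega) : ¬(2 ≤ 1 ∧ w (1 - 1) < w (1 - 2)))]
      rcases Nat.eq_zero_or_pos m' with rfl | hm'
      · -- m = 1
        rw [if_neg (fun h => absurd h.1 (by omega) : ¬(1 + 1 ≤ 0 + 1 ∧ turn w 1))]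
        rw [if_neg (fun h => absurd h.1 (by omega) : ¬(1 + 1 ≤ 0 + 1 ∧ w 1 < w (1 + 1)))]
        rw [Finset.sum_Ioc_succ_top (by omega : (0:ℕ) ≤ 0)]
        simp only [Finset.Ioc_self, Finset.sum_empty]
        rw [if_pos (hpeak (by omega))]
      · -- m ≥ 2
        have hFc : (1 + 1 ≤ m' + 1 ∧ turn w 1) ↔ turn w 1 := and_iff_right (by omega)
        have hBc : (1 + 1 ≤ m' + 1 ∧ w 1 < w (1 + 1)) ↔ w 1 < w 2 := by
          rw [and_iff_right (by omega), show (1:ℕ) + 1 = 2 from rfl]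
        rw [← Finset.sum_Ioc_consecutive _ (by omega : (0:ℕ) ≤ 2) (by omega : 2 ≤ m' + 1)]
        rw [Finset.sum_Ioc_succ_top (by omega : (0:ℕ) ≤ 1)]
        rw [Finset.sum_Ioc_succ_top (by omega : (0:ℕ) ≤ 0)]
        simp only [Finset.Ioc_self, Finset.sum_empty]
        rw [hhi 1 (by omega) (by omega)]
        rw [← Finset.sum_Ioc_consecutive _ (by omega : (0:ℕ) ≤ 1) (by omega : 1 ≤ m')]
        rw [Finset.sum_Ioc_succ_top (by omega : (0:ℕ) ≤ 0)]
        simp only [Finset.Ioc_self, Finset.sum_empty]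
        rw [if_pos (hpeak (by omega))]
        have h2e : turn u (1 + 1) ↔ w 1 < w 2 := by
          rw [turn_after_max (M := M)
            (show u (1 + 1 - 1) = M from h2) (by rw [h3 2 (by omega) (by omega)]; exact hbW 1 (by omega))]
          rw [h3 (1 + 1) (by omega) (by omega), h3 (1 + 1 + 1) (by omega) (by omega)]
        simp only [hFc, hBc, h2e, Nat.zero_add]
        omega
    · -- 2 ≤ pp
      obtain ⟨q, rfl⟩ : ∃ q, pp = q + 2 := ⟨pp - 2, by omega⟩
      have hEA : ∀ P : Prop, ∀ [Decidable P], (2 ≤ q + 2 ∧ P) ↔ P := fun P _ => and_iff_right (by omega)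
      simp only [show q + 2 - 1 = q + 1 from by omega, show q + 2 - 2 = q from by omega]
      rcases Nat.lt_or_ge m' (q + 2) with hm'q | hm'q
      · -- pp = m, i.e. m' = q + 1
        have hm'e : m' = q + 1 := by omega
        subst hm'e
        have hEc : (2 ≤ q + 2 ∧ q + 2 ≤ q + 1 + 1 ∧ turn w (q + 1)) ↔ turn w (q + 1) := by
          constructor
          · exact fun h => h.2.2
          · exact fun h => ⟨by omega, by omega, h⟩
        have hAc : (2 ≤ q + 2 ∧ w (q + 1) < w q) ↔ w (q + 1) < w q := and_iff_right (by omega)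
        simp only [hEc, hAc]
        rw [if_neg (fun h => absurd h.1 (by omega) : ¬(q + 2 + 1 ≤ q + 1 + 1 ∧ turn w (q + 2)))]
        rw [if_neg (fun h => absurd h.1 (by omega) :
          ¬(q + 2 + 1 ≤ q + 1 + 1 ∧ w (q + 2) < w (q + 2 + 1)))]
        rw [Finset.sum_Ioc_succ_top (by omega : (0:ℕ) ≤ q + 1)]
        rw [Finset.sum_Ioc_succ_top (by omega : (0:ℕ) ≤ q)]
        rw [Finset.sum_Ioc_succ_top (by omega : (0:ℕ) ≤ q)]
        rw [hlo q (by omega)]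
        rw [if_pos (hpeak (by omega))]
        have hq1 : turn u (q + 1) ↔ w (q + 1) < w q := by
          rw [turn_before_max (M := M)
            (by rw [h1 (q + 1) (by omega)]; exact hbW _ (by omega))
            (show u (q + 1 + 1) = M from h2)]
          rw [h1 (q + 1) (by omega), show q + 1 - 1 = q from by omega, h1 q (by omega)]
        simp only [hq1]
        omega
      · -- pp + 1 ≤ m, i.e. q + 2 ≤ m'
        have hEc : (2 ≤ q + 2 ∧ q + 2 ≤ m' + 1 ∧ turn w (q + 1)) ↔ turn w (q + 1) := by
          constructor
          · exact fun h => h.2.2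
          · exact fun h => ⟨by omega, by omega, h⟩
        have hAc : (2 ≤ q + 2 ∧ w (q + 1) < w q) ↔ w (q + 1) < w q := and_iff_right (by omega)
        have hFc : (q + 2 + 1 ≤ m' + 1 ∧ turn w (q + 2)) ↔ turn w (q + 2) :=
          and_iff_right (by omega)
        have hBc : (q + 2 + 1 ≤ m' + 1 ∧ w (q + 2) < w (q + 2 + 1)) ↔ w (q + 2) < w (q + 3) := by
          rw [and_iff_right (by omega), show q + 2 + 1 = q + 3 from by omega]
        simp only [hEc, hAc, hFc, hBc]
        rw [← Finset.sum_Ioc_consecutive _ (by omega : (0:ℕ) ≤ q + 3) (by omega : q + 3 ≤ m' + 1)]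
        rw [Finset.sum_Ioc_succ_top (by omega : (0:ℕ) ≤ q + 2)]
        rw [Finset.sum_Ioc_succ_top (by omega : (0:ℕ) ≤ q + 1)]
        rw [Finset.sum_Ioc_succ_top (by omega : (0:ℕ) ≤ q)]
        rw [hlo q (by omega)]
        rw [hhi (q + 2) (by omega) (by omega)]
        rw [← Finset.sum_Ioc_consecutive _ (by omega : (0:ℕ) ≤ q + 2) (by omega : q + 2 ≤ m')]
        rw [Finset.sum_Ioc_succ_top (by omega : (0:ℕ) ≤ q + 1)]
        rw [Finset.sum_Ioc_succ_top (by omega : (0:ℕ) ≤ q)]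
        rw [if_pos (hpeak (by omega))]
        have hq1 : turn u (q + 1) ↔ w (q + 1) < w q := by
          rw [turn_before_max (M := M)
            (by rw [h1 (q + 1) (by omega)]; exact hbW _ (by omega))
            (show u (q + 1 + 1) = M from h2)]
          rw [h1 (q + 1) (by omega), show q + 1 - 1 = q from by omega, h1 q (by omega)]
        have hq3 : turn u (q + 2 + 1) ↔ w (q + 2) < w (q + 3) := by
          rw [turn_after_max (M := M)
            (show u (q + 2 + 1 - 1) = M from by rw [show q + 2 + 1 - 1 = q + 2 from by omega]; exact h2)
            (by rw [h3 (q + 2 + 1) (by omega) (by omega), show q + 2 + 1 - 1 = q + 2 from by omega]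
                exact hbW _ (by omega))]
          rw [h3 (q + 2 + 1) (by omega) (by omega), show q + 2 + 1 - 1 = q + 2 from by omega,
            h3 (q + 2 + 1 + 1) (by omega) (by omega), show q + 2 + 1 + 1 - 1 = q + 3 from by omega]
        simp only [hq1, hq3]
        simp only [show q + 1 + 1 = q + 2 from rfl, show q + 2 + 1 = q + 3 from rfl]
        omega
  · -- pp = m + 1
    have hppA : pp = m' + 2 := by omega
    subst hppA
    rw [if_neg (fun h => absurd h.2.1 (by omega) :
      ¬(2 ≤ m' + 2 ∧ m' + 2 ≤ m' + 1 ∧ turn w (m' + 2 - 1)))]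
    rw [if_neg (fun h => absurd h.1 (by omega) :
      ¬(m' + 2 + 1 ≤ m' + 1 ∧ turn w (m' + 2)))]
    rw [if_neg (by omega : ¬(m' + 2 ≤ m' + 1))]
    rw [if_neg (fun h => absurd h.1 (by omega) :
      ¬(m' + 2 + 1 ≤ m' + 1 ∧ w (m' + 2) < w (m' + 2 + 1)))]
    simp only [show m' + 2 - 1 = m' + 1 from by omega, show m' + 2 - 2 = m' from by omega]
    have hAc : (2 ≤ m' + 2 ∧ w (m' + 1) < w m') ↔ w (m' + 1) < w m' := and_iff_right (by omega)
    simp only [hAc]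
    rw [Finset.sum_Ioc_succ_top (by omega : (0:ℕ) ≤ m')]
    rw [hlo m' (by omega)]
    have hend : turn u (m' + 1) ↔ w (m' + 1) < w m' := by
      rw [turn_before_max (M := M)
        (by rw [h1 (m' + 1) (by omega)]; exact hbW _ (by omega))
        (show u (m' + 1 + 1) = M from h2)]
      rw [h1 (m' + 1) (by omega), show m' + 1 - 1 = m' from by omega, h1 m' (by omega)]
    simp only [hend]
    omega

lemma turn_iff_asc {w : ℕ → ℤ} {i : ℕ} (h : w (i - 1) < w i) :
    turn w i ↔ w (i + 1) < w i := by
  unfold turn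
  constructor
  · rintro (⟨_, h2⟩ | ⟨h1, _⟩)
    · exact h2
    · linarith
  · intro hh
    exact Or.inl ⟨h, hh⟩

lemma turn_iff_desc {w : ℕ → ℤ} {i : ℕ} (h : w i < w (i - 1)) :
    turn w i ↔ w i < w (i + 1) := by
  unfold turn
  constructor
  · rintro (⟨h1, _⟩ | ⟨_, h2⟩)
    · linarith
    · exact h2
  · intro hh
    exact Or.inr ⟨h, hh⟩

lemma pow_pair_eq {a b c d : ℕ} (h : (a = c ∧ b = d) ∨ (a = d ∧ b = c)) :
    (X : ℤ[X]) ^ a + X ^ b = X ^ c + X ^ d := by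
  rcases h with ⟨rfl, rfl⟩ | ⟨rfl, rfl⟩
  · rfl
  · exact add_comm _ _

lemma slot_pair (m pp K : ℕ) (hm : 1 ≤ m) (hpp1 : 1 ≤ pp) (hpp2 : pp ≤ m + 1)
    (w : ℕ → ℤ) (cf ct : ℕ)
    (hdist : ∀ i, 1 ≤ i → i ≤ m → w (i - 1) ≠ w i)
    (eqf : cf + (if 2 ≤ pp ∧ pp ≤ m ∧ turn w (pp - 1) then 1 else 0)
        + (if pp + 1 ≤ m ∧ turn w pp then 1 else 0)
      = K + (if pp ≤ m then 1 else 0) + (if 2 ≤ pp ∧ w (pp - 1) < w (pp - 2) then 1 else 0)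
        + (if pp + 1 ≤ m ∧ w pp < w (pp + 1) then 1 else 0))
    (eqt : ct + (if 2 ≤ pp ∧ pp ≤ m ∧ turn w (pp - 1) then 1 else 0)
        + (if pp + 1 ≤ m ∧ turn w pp then 1 else 0)
      = K + (if pp ≤ m then 1 else 0) + (if 2 ≤ pp ∧ w (pp - 2) < w (pp - 1) then 1 else 0)
        + (if pp + 1 ≤ m ∧ w (pp + 1) < w pp then 1 else 0)) :
    (X : ℤ[X]) ^ (1 + cf) + X ^ (1 + ct)
      = (if pp = m + 1 then X ^ (K + 1) + X ^ (K + 2)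
         else ((if pp = m then X ^ (K + 2) else if turn w pp then X ^ (K + 1) else X ^ (K + 3))
           + (if pp = 1 then X ^ (K + 2)
              else if turn w (pp - 1) then X ^ (K + 1) else X ^ (K + 3)))) := by
  obtain ⟨m', rfl⟩ : ∃ m', m = m' + 1 := ⟨m - 1, by omega⟩
  rcases Nat.lt_or_ge pp (m' + 2) with hcase | hcase
  · -- pp ≤ m
    rw [if_neg (by omega : ¬ pp = m' + 1 + 1)]
    rw [if_pos (by omega : pp ≤ m' + 1)] at eqf eqt
    rcases eq_or_ne pp 1 with rfl | hpp_ne1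
    · rw [if_neg (fun h => absurd h.1 (by omega) : ¬(2 ≤ 1 ∧ 1 ≤ m' + 1 ∧ turn w (1 - 1)))]
        at eqf eqt
      rw [if_neg (fun h => absurd h.1 (by omega) : ¬(2 ≤ 1 ∧ w (1 - 1) < w (1 - 2)))] at eqf
      rw [if_neg (fun h => absurd h.1 (by omega) : ¬(2 ≤ 1 ∧ w (1 - 2) < w (1 - 1)))] at eqt
      rw [if_pos rfl]
      rcases Nat.eq_zero_or_pos m' with rfl | hm'
      · -- m = 1
        rw [if_neg (fun h => absurd h.1 (by omega) : ¬(1 + 1 ≤ 0 + 1 ∧ turn w 1))] at eqf eqt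
        rw [if_neg (fun h => absurd h.1 (by omega) : ¬(1 + 1 ≤ 0 + 1 ∧ w 1 < w (1 + 1)))] at eqf
        rw [if_neg (fun h => absurd h.1 (by omega) : ¬(1 + 1 ≤ 0 + 1 ∧ w (1 + 1) < w 1))] at eqt
        rw [if_pos (by omega : 1 = 0 + 1)]
        exact pow_pair_eq (by omega)
      · -- m ≥ 2
        rw [if_neg (by omega : ¬ (1:ℕ) = m' + 1)]
        have hd1 := hdist 1 (by omega) (by omega)
        have hd2 := hdist 2 (by omega) (by omega)
        simp only [show (1:ℕ) - 1 = 0 from rfl, show (2:ℕ) - 1 = 1 from rfl,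
          show (1:ℕ) + 1 = 2 from rfl] at hd1 hd2 eqf eqt ⊢
        have hF : (2 ≤ m' + 1 ∧ turn w 1) ↔ turn w 1 := and_iff_right (by omega)
        have hBf : (2 ≤ m' + 1 ∧ w 1 < w 2) ↔ w 1 < w 2 := and_iff_right (by omega)
        have hBt : (2 ≤ m' + 1 ∧ w 2 < w 1) ↔ w 2 < w 1 := and_iff_right (by omega)
        simp only [hF, hBf, hBt] at eqf eqt
        rcases hd1.lt_or_gt with h01 | h01
        · have ht : turn w 1 ↔ w 2 < w 1 := by
            have := turn_iff_asc (w := w) (i := 1) (by simpa using h01)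
            simpa using this
          simp only [ht] at eqf eqt ⊢
          split_ifs at eqf eqt ⊢ <;> exact pow_pair_eq (by omega)
        · have ht : turn w 1 ↔ w 1 < w 2 := by
            have := turn_iff_desc (w := w) (i := 1) (by simpa using h01)
            simpa using this
          simp only [ht] at eqf eqt ⊢
          split_ifs at eqf eqt ⊢ <;> exact pow_pair_eq (by omega)
    · -- 2 ≤ pp
      obtain ⟨q, rfl⟩ : ∃ q, pp = q + 2 := ⟨pp - 2, by omega⟩
      rw [if_neg (by omega : ¬ q + 2 = 1)]
      simp only [show q + 2 - 1 = q + 1 from by omega, show q + 2 - 2 = q from by omega,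
        show q + 2 + 1 = q + 3 from rfl] at eqf eqt ⊢
      have hd1 := hdist (q + 1) (by omega) (by omega)
      have hd2 := hdist (q + 2) (by omega) (by omega)
      simp only [show q + 1 - 1 = q from by omega, show q + 2 - 1 = q + 1 from by omega]
        at hd1 hd2
      have hA : ∀ P : Prop, ∀ _ : Decidable P, (2 ≤ q + 2 ∧ P) = P := fun P _ =>
        eq_true_intro (by omega : 2 ≤ q + 2) ▸ (true_and P)
      simp only [hA] at eqf eqt
      have hE2 : (q + 2 ≤ m' + 1 ∧ turn w (q + 1)) ↔ turn w (q + 1) :=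
        and_iff_right (by omega)
      simp only [hE2] at eqf eqt
      rcases Nat.lt_or_ge m' (q + 2) with hm'q | hm'q
      · -- pp = m
        have hm'e : m' = q + 1 := by omega
        subst hm'e
        rw [if_pos (by omega : q + 2 = q + 1 + 1)]
        rw [if_neg (fun h => absurd h.1 (by omega) :
          ¬(q + 3 ≤ q + 1 + 1 ∧ turn w (q + 2)))] at eqf eqt
        rw [if_neg (fun h => absurd h.1 (by omega) :
          ¬(q + 3 ≤ q + 1 + 1 ∧ w (q + 2) < w (q + 3)))] at eqf
        rw [if_neg (fun h => absurd h.1 (by omega) :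
          ¬(q + 3 ≤ q + 1 + 1 ∧ w (q + 3) < w (q + 2)))] at eqt
        rcases hd1.lt_or_gt with hq1 | hq1
        · have ht : turn w (q + 1) ↔ w (q + 2) < w (q + 1) := by
            have := turn_iff_asc (w := w) (i := q + 1)
              (by rw [show q + 1 - 1 = q from by omega]; exact hq1)
            rwa [show q + 1 + 1 = q + 2 from rfl] at this
          simp only [ht] at eqf eqt ⊢
          split_ifs at eqf eqt ⊢ <;> exact pow_pair_eq (by omega)
        · have ht : turn w (q + 1) ↔ w (q + 1) < w (q + 2) := by
            have := turn_iff_desc (w := w) (i := q + 1)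
              (by rw [show q + 1 - 1 = q from by omega]; exact hq1)
            rwa [show q + 1 + 1 = q + 2 from rfl] at this
          simp only [ht] at eqf eqt ⊢
          split_ifs at eqf eqt ⊢ <;> exact pow_pair_eq (by omega)
      · -- pp + 1 ≤ m
        have hd3 := hdist (q + 3) (by omega) (by omega)
        simp only [show q + 3 - 1 = q + 2 from by omega] at hd3
        rw [if_neg (by omega : ¬ q + 2 = m' + 1)]
        have hF : (q + 3 ≤ m' + 1 ∧ turn w (q + 2)) ↔ turn w (q + 2) :=
          and_iff_right (by omega)
        have hBf : (q + 3 ≤ m' + 1 ∧ w (q + 2) < w (q + 3)) ↔ w (q + 2) < w (q + 3) :=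
          and_iff_right (by omega)
        have hBt : (q + 3 ≤ m' + 1 ∧ w (q + 3) < w (q + 2)) ↔ w (q + 3) < w (q + 2) :=
          and_iff_right (by omega)
        simp only [hF, hBf, hBt] at eqf eqt
        have ht1 : turn w (q + 1) ↔
            (if w q < w (q + 1) then w (q + 2) < w (q + 1) else w (q + 1) < w (q + 2)) := by
          rcases hd1.lt_or_gt with hq1 | hq1
          · rw [if_pos hq1]
            have := turn_iff_asc (w := w) (i := q + 1)
              (by rw [show q + 1 - 1 = q from by omega]; exact hq1)
            rwa [show q + 1 + 1 = q + 2 from rfl] at this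
          · rw [if_neg (by omega : ¬ w q < w (q + 1))]
            have := turn_iff_desc (w := w) (i := q + 1)
              (by rw [show q + 1 - 1 = q from by omega]; exact hq1)
            rwa [show q + 1 + 1 = q + 2 from rfl] at this
        have ht2 : turn w (q + 2) ↔
            (if w (q + 1) < w (q + 2) then w (q + 3) < w (q + 2)
             else w (q + 2) < w (q + 3)) := by
          rcases hd2.lt_or_gt with hq2 | hq2
          · rw [if_pos hq2]
            have := turn_iff_asc (w := w) (i := q + 2)
              (by rw [show q + 2 - 1 = q + 1 from by omega]; exact hq2)
            rwa [show q + 2 + 1 = q + 3 from rfl] at this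
          · rw [if_neg (by omega : ¬ w (q + 1) < w (q + 2))]
            have := turn_iff_desc (w := w) (i := q + 2)
              (by rw [show q + 2 - 1 = q + 1 from by omega]; exact hq2)
            rwa [show q + 2 + 1 = q + 3 from rfl] at this
        simp only [ht1, ht2] at eqf eqt ⊢
        split_ifs at eqf eqt ⊢ <;> exact pow_pair_eq (by omega)
  · -- pp = m + 1
    have hppA : pp = m' + 2 := by omega
    subst hppA
    rw [if_pos (by omega : m' + 2 = m' + 1 + 1)]
    rw [if_neg (fun h => absurd h.2.1 (by omega) :
      ¬(2 ≤ m' + 2 ∧ m' + 2 ≤ m' + 1 ∧ turn w (m' + 2 - 1)))] at eqf eqt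
    rw [if_neg (fun h => absurd h.1 (by omega) :
      ¬(m' + 2 + 1 ≤ m' + 1 ∧ turn w (m' + 2)))] at eqf eqt
    rw [if_neg (by omega : ¬(m' + 2 ≤ m' + 1))] at eqf eqt
    rw [if_neg (fun h => absurd h.1 (by omega) :
      ¬(m' + 2 + 1 ≤ m' + 1 ∧ w (m' + 2) < w (m' + 2 + 1)))] at eqf
    rw [if_neg (fun h => absurd h.1 (by omega) :
      ¬(m' + 2 + 1 ≤ m' + 1 ∧ w (m' + 2 + 1) < w (m' + 2)))] at eqt
    simp only [show m' + 2 - 1 = m' + 1 from by omega, show m' + 2 - 2 = m' from by omega]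
      at eqf eqt
    have hA : ∀ P : Prop, ∀ _ : Decidable P, (2 ≤ m' + 2 ∧ P) = P := fun P _ =>
      eq_true_intro (by omega : 2 ≤ m' + 2) ▸ (true_and P)
    simp only [hA] at eqf eqt
    have hd := hdist (m' + 1) (by omega) (by omega)
    simp only [show m' + 1 - 1 = m' from by omega] at hd
    split_ifs at eqf eqt <;> exact pow_pair_eq (by omega)

lemma slot_p (n : ℕ) (σ : Equiv.Perm (Fin (n + 1))) (ε : Fin (n + 1) → Bool)
    (p : Fin (n + 1 + 1)) :
    (∑ b : Bool, (X : ℤ[X]) ^ sgnAltRuns (n + 1 + 1) (bigPerm σ p) (bigSign ε p b))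
      = (if (p : ℕ) + 1 = (n + 1) + 1 then
            X ^ (((Finset.Icc 1 n).filter (turn (sgnWord σ ε))).card + 1)
              + X ^ (((Finset.Icc 1 n).filter (turn (sgnWord σ ε))).card + 2)
         else ((if (p : ℕ) + 1 = n + 1 then
                  X ^ (((Finset.Icc 1 n).filter (turn (sgnWord σ ε))).card + 2)
                else if turn (sgnWord σ ε) ((p : ℕ) + 1) then
                  X ^ (((Finset.Icc 1 n).filter (turn (sgnWord σ ε))).card + 1)
                else X ^ (((Finset.Icc 1 n).filter (turn (sgnWord σ ε))).card + 3))
           + (if (p : ℕ) + 1 = 1 then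
                X ^ (((Finset.Icc 1 n).filter (turn (sgnWord σ ε))).card + 2)
              else if turn (sgnWord σ ε) ((p : ℕ) + 1 - 1) then
                X ^ (((Finset.Icc 1 n).filter (turn (sgnWord σ ε))).card + 1)
              else X ^ (((Finset.Icc 1 n).filter (turn (sgnWord σ ε))).card + 3)))) := by
  classical
  have hple : (p : ℕ) < n + 1 + 1 := p.isLt
  have eqf := core (n + 1) (by omega) ((p : ℕ) + 1) (by omega) (by omega)
    (sgnWord σ ε) (sgnWord (bigPerm σ p) (bigSign ε p false)) (((n + 1 : ℕ) : ℤ) + 1)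
    (fun j _ => sgnWord_bound σ ε j)
    (fun j hj => bigWord_lt σ ε p false hj)
    (by simpa using bigWord_eq σ ε p false)
    (fun j hj hjm => bigWord_gt σ ε p false hj hjm)
  have eqt := core (n + 1) (by omega) ((p : ℕ) + 1) (by omega) (by omega)
    (fun j => -(sgnWord σ ε j))
    (fun j => -(sgnWord (bigPerm σ p) (bigSign ε p true) j)) (((n + 1 : ℕ) : ℤ) + 1)
    (fun j _ => ⟨by
        show -(((n + 1 : ℕ) : ℤ) + 1) < -(sgnWord σ ε j)
        have := (sgnWord_bound σ ε j).2
        linarith, by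
        show -(sgnWord σ ε j) < ((n + 1 : ℕ) : ℤ) + 1
        have := (sgnWord_bound σ ε j).1
        linarith⟩)
    (fun j hj => by
      show -(sgnWord (bigPerm σ p) (bigSign ε p true) j) = -(sgnWord σ ε j)
      rw [bigWord_lt σ ε p true hj])
    (by
      show -(sgnWord (bigPerm σ p) (bigSign ε p true) ((p : ℕ) + 1)) = ((n + 1 : ℕ) : ℤ) + 1
      rw [show sgnWord (bigPerm σ p) (bigSign ε p true) ((p : ℕ) + 1)
          = -(((n + 1 : ℕ) : ℤ) + 1) from by simpa using bigWord_eq σ ε p true]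
      ring)
    (fun j hj hjm => by
      show -(sgnWord (bigPerm σ p) (bigSign ε p true) j) = -(sgnWord σ ε (j - 1))
      rw [bigWord_gt σ ε p true hj hjm])
  have hfneg : ∀ (v : ℕ → ℤ) (s : Finset ℕ),
      s.filter (turn (fun j => -(v j))) = s.filter (turn v) := fun v s =>
    Finset.filter_congr fun i _ => turn_neg v i
  rw [hfneg, hfneg] at eqt
  simp only [turn_neg, neg_lt_neg_iff] at eqt
  simp only [Nat.add_sub_cancel] at eqf eqt
  have hrF := sgnAltRuns_eq (n + 1 + 1) (bigPerm σ p) (bigSign ε p false)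
  have hrT := sgnAltRuns_eq (n + 1 + 1) (bigPerm σ p) (bigSign ε p true)
  simp only [Nat.add_sub_cancel] at hrF hrT
  rw [Fintype.sum_bool, hrF, hrT, add_comm]
  exact slot_pair (n + 1) ((p : ℕ) + 1)
    (((Finset.Icc 1 n).filter (turn (sgnWord σ ε))).card) (by omega) (by omega) (by omega)
    (sgnWord σ ε) _ _ (fun i h1 h2 => sgnWord_adj_ne σ ε h1 h2) eqf eqt

/-- Slot sum over all insertion positions and signs, for a fixed small signed permutation. -/
lemma slotSum (m : ℕ) (hm : 1 ≤ m) (σ : Equiv.Perm (Fin m)) (ε : Fin m → Bool) :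
    ∑ p : Fin (m + 1), ∑ b : Bool,
        (X : ℤ[X]) ^ sgnAltRuns (m + 1) (bigPerm σ p) (bigSign ε p b)
      = Lop m ((X : ℤ[X]) ^ sgnAltRuns m σ ε) := by
  classical
  obtain ⟨n, rfl⟩ : ∃ n, m = n + 1 := ⟨m - 1, by omega⟩
  rw [Finset.sum_congr rfl (fun p _ => slot_p n σ ε p)]
  rw [Fin.sum_univ_eq_sum_range (fun i =>
    (if i + 1 = (n + 1) + 1 then
        X ^ (((Finset.Icc 1 n).filter (turn (sgnWord σ ε))).card + 1)
          + X ^ (((Finset.Icc 1 n).filter (turn (sgnWord σ ε))).card + 2)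
     else ((if i + 1 = n + 1 then
              X ^ (((Finset.Icc 1 n).filter (turn (sgnWord σ ε))).card + 2)
            else if turn (sgnWord σ ε) (i + 1) then
              X ^ (((Finset.Icc 1 n).filter (turn (sgnWord σ ε))).card + 1)
            else X ^ (((Finset.Icc 1 n).filter (turn (sgnWord σ ε))).card + 3))
       + (if i + 1 = 1 then
            X ^ (((Finset.Icc 1 n).filter (turn (sgnWord σ ε))).card + 2)
          else if turn (sgnWord σ ε) (i + 1 - 1) then
            X ^ (((Finset.Icc 1 n).filter (turn (sgnWord σ ε))).card + 1)
          else X ^ (((Finset.Icc 1 n).filter (turn (sgnWord σ ε))).card + 3))))) (n + 1 + 1)]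
  set K := ((Finset.Icc 1 n).filter (turn (sgnWord σ ε))).card with hKdef
  rw [Finset.sum_range_succ, if_pos rfl]
  rw [Finset.sum_congr rfl (fun i hi => by
    rw [if_neg (by have := Finset.mem_range.mp hi; omega : ¬ i + 1 = n + 1 + 1)])]
  rw [Finset.sum_add_distrib]
  rw [Finset.sum_range_succ, if_pos rfl]
  rw [Finset.sum_congr rfl (fun i hi => by
    rw [if_neg (by have := Finset.mem_range.mp hi; omega : ¬ i + 1 = n + 1)])]
  rw [Finset.sum_range_succ', if_pos rfl]
  have hgg : (∑ x ∈ Finset.range n,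
      (if x + 1 + 1 = 1 then (X : ℤ[X]) ^ (K + 2)
       else if turn (sgnWord σ ε) (x + 1 + 1 - 1) then X ^ (K + 1) else X ^ (K + 3)))
      = ∑ x ∈ Finset.range n,
      (if turn (sgnWord σ ε) (x + 1) then (X : ℤ[X]) ^ (K + 1) else X ^ (K + 3)) :=
    Finset.sum_congr rfl (fun i hi => by
      rw [if_neg (by omega : ¬ i + 1 + 1 = 1), show i + 1 + 1 - 1 = i + 1 from rfl])
  rw [hgg]
  -- evaluate the two identical middle sums
  have hIcoIcc : Finset.Ico 1 (n + 1) = Finset.Icc 1 n := by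
    ext x; simp [Finset.mem_Ico, Finset.mem_Icc]
  have hmid : (∑ i ∈ Finset.range n,
      (if turn (sgnWord σ ε) (i + 1) then (X : ℤ[X]) ^ (K + 1) else X ^ (K + 3)))
      = K • (X : ℤ[X]) ^ (K + 1) +
        (((Finset.Icc 1 n).filter (fun i => ¬ turn (sgnWord σ ε) i)).card) • X ^ (K + 3) := by
    have hshift : (∑ i ∈ Finset.Ico 1 (n + 1),
        (if turn (sgnWord σ ε) i then (X : ℤ[X]) ^ (K + 1) else X ^ (K + 3)))
        = ∑ i ∈ Finset.range n,
          (if turn (sgnWord σ ε) (i + 1) then (X : ℤ[X]) ^ (K + 1) else X ^ (K + 3)) := by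
      rw [← Finset.map_add_right_Ico 0 n 1, Finset.sum_map, Finset.range_eq_Ico]
      refine Finset.sum_congr rfl fun i _ => ?_
      simp [addRightEmbedding_apply]
    rw [← hshift, hIcoIcc, Finset.sum_ite, Finset.sum_const, Finset.sum_const, hKdef]
  rw [hmid]
  have hcards : K + ((Finset.Icc 1 n).filter (fun i => ¬ turn (sgnWord σ ε) i)).card = n := by
    rw [hKdef, Finset.card_filter_add_card_filter_not, Nat.card_Icc]
    omega
  set Kn := ((Finset.Icc 1 n).filter (fun i => ¬ turn (sgnWord σ ε) i)).card with hKndef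
  -- right-hand side
  rw [sgnAltRuns_eq]
  simp only [Nat.add_sub_cancel]
  rw [← hKdef]
  unfold Lop
  rw [derivative_X_pow]
  rw [show 1 + K - 1 = K from by omega]
  simp only [nsmul_eq_mul, ← C_eq_natCast]
  push_cast
  rw [show (n : ℤ) = (K : ℤ) + (Kn : ℤ) from by exact_mod_cast congrArg (Nat.cast : ℕ → ℤ) hcards.symm]
  simp only [map_add, map_mul, map_ofNat, map_one, map_zero]
  ring

lemma QPoly_rec (m : ℕ) (hm : 1 ≤ m) : QPoly (m + 1) = Lop m (QPoly m) := by
  classical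
  have hbij : Function.Bijective
      (fun x : (Equiv.Perm (Fin m) × (Fin m → Bool)) × (Fin (m + 1) × Bool) =>
        ((bigPerm x.1.1 x.2.1, bigSign x.1.2 x.2.1 x.2.2) :
          Equiv.Perm (Fin (m + 1)) × (Fin (m + 1) → Bool))) := by
    rw [Fintype.bijective_iff_injective_and_card]
    constructor
    · rintro ⟨⟨σ, ε⟩, ⟨p, b⟩⟩ ⟨⟨σ', ε'⟩, ⟨p', b'⟩⟩ h
      simp only [Prod.mk.injEq] at h
      obtain ⟨h1, h2⟩ := h
      have hp : p = p' := by
        apply (bigPerm σ' p').injective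
        rw [bigPerm_apply_self, ← h1, bigPerm_apply_self]
      subst hp
      have hσ : σ = σ' := by
        apply Equiv.ext
        intro i
        have h3 := DFunLike.congr_fun h1 (p.succAbove i)
        rw [bigPerm_apply_succAbove, bigPerm_apply_succAbove] at h3
        exact Fin.castSucc_injective _ h3
      have hε : ε = ε' := by
        funext i
        have h3 := congrFun h2 (p.succAbove i)
        rwa [bigSign_succAbove, bigSign_succAbove] at h3
      have hb : b = b' := by
        have h3 := congrFun h2 p
        rwa [bigSign_self, bigSign_self] at h3
      simp [hσ, hε, hb]
    · simp only [Fintype.card_prod, Fintype.card_perm, Fintype.card_fun, Fintype.card_fin,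
        Fintype.card_bool, Nat.factorial_succ]
      ring
  have hsum := Fintype.sum_bijective _ hbij
    (fun x : (Equiv.Perm (Fin m) × (Fin m → Bool)) × (Fin (m + 1) × Bool) =>
      (X : ℤ[X]) ^ sgnAltRuns (m + 1) (bigPerm x.1.1 x.2.1) (bigSign x.1.2 x.2.1 x.2.2))
    (fun q : Equiv.Perm (Fin (m + 1)) × (Fin (m + 1) → Bool) =>
      (X : ℤ[X]) ^ sgnAltRuns (m + 1) q.1 q.2)
    (fun x => rfl)
  unfold QPoly
  rw [← hsum, Fintype.sum_prod_type]
  have hinner : ∀ s : Equiv.Perm (Fin m) × (Fin m → Bool),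
      (∑ pb : Fin (m + 1) × Bool,
          (X : ℤ[X]) ^ sgnAltRuns (m + 1) (bigPerm s.1 pb.1) (bigSign s.2 pb.1 pb.2))
        = Lop m ((X : ℤ[X]) ^ sgnAltRuns m s.1 s.2) := by
    intro s
    rw [Fintype.sum_prod_type]
    exact slotSum m hm s.1 s.2
  rw [Finset.sum_congr rfl (fun s _ => hinner s), ← Lop_sum]

lemma sgnWord_neg {m : ℕ} (σ : Equiv.Perm (Fin m)) (ε : Fin m → Bool) (j : ℕ) :
    sgnWord σ (fun k => !ε k) j = - sgnWord σ ε j := by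
  unfold sgnWord
  rcases eq_or_ne j 0 with rfl | hj
  · simp
  rw [if_neg hj, if_neg hj]
  by_cases h : j - 1 < m
  · rw [dif_pos h, dif_pos h]
    by_cases hε : ε ⟨j - 1, h⟩ <;> simp [hε]
  · rw [dif_neg h, dif_neg h]; simp

lemma sgnAltRuns_neg {m : ℕ} (σ : Equiv.Perm (Fin m)) (ε : Fin m → Bool) :
    sgnAltRuns m σ (fun k => !ε k) = sgnAltRuns m σ ε := by
  rw [sgnAltRuns_eq, sgnAltRuns_eq]
  congr 1
  congr 1
  apply Finset.filter_congr
  intro i _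
  have hfun : sgnWord σ (fun k => !ε k) = fun j => - sgnWord σ ε j := by
    funext j; exact sgnWord_neg σ ε j
  rw [hfun]
  exact turn_neg _ i

lemma QPoly_eq (m : ℕ) (hm : 1 ≤ m) : QPoly m = 2 * RhatPoly m := by
  classical
  unfold QPoly RhatPoly
  rw [← Finset.sum_filter_add_sum_filter_not Finset.univ
    (fun p : Equiv.Perm (Fin m) × (Fin m → Bool) => 0 < sgnWord p.1 p.2 1)]
  have hneg : ∑ p ∈ Finset.univ.filter
        (fun p : Equiv.Perm (Fin m) × (Fin m → Bool) => ¬ 0 < sgnWord p.1 p.2 1),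
        (X : ℤ[X]) ^ sgnAltRuns m p.1 p.2
      = ∑ p ∈ Finset.univ.filter
        (fun p : Equiv.Perm (Fin m) × (Fin m → Bool) => 0 < sgnWord p.1 p.2 1),
        (X : ℤ[X]) ^ sgnAltRuns m p.1 p.2 := by
    apply Finset.sum_nbij' (fun p => (p.1, fun k => !p.2 k)) (fun p => (p.1, fun k => !p.2 k))
    · intro p hp
      simp only [Finset.mem_filter, Finset.mem_univ, true_and] at hp ⊢
      have := sgnWord_neg p.1 p.2 1
      have hz := sgnWord_one_ne_zero hm p.1 p.2
      omega
    · intro p hp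
      simp only [Finset.mem_filter, Finset.mem_univ, true_and] at hp ⊢
      have := sgnWord_neg p.1 p.2 1
      omega
    · intro p _; ext k <;> simp
    · intro p _; ext k <;> simp
    · intro p _
      simp only
      rw [sgnAltRuns_neg]
  rw [hneg]
  ring

/-- closed form -/
noncomputable def Fpoly (n : ℕ) : ℤ[X] :=
  Polynomial.X * (1 + Polynomial.X) ^ n *
    ∑ j ∈ Finset.range (n + 1),
      Polynomial.C ((2 : ℤ) ^ j * ((2 * j + 1).factorial : ℤ) * V n j) *
        Polynomial.X ^ j * (1 - Polynomial.X) ^ (n - j)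

noncomputable def Spoly (a b c : ℕ) : ℤ[X] := X ^ a * (1 + X) ^ b * (1 - X) ^ c

lemma pow_pred_mul (p : ℤ[X]) (k : ℕ) : C (k : ℤ) * p ^ (k - 1) * p = C (k : ℤ) * p ^ k := by
  cases k with
  | zero => simp
  | succ k => simp [pow_succ]; ring

lemma deriv_S (a b c : ℕ) :
    (2 * X - 2 * X ^ 3) * derivative (Spoly a b c)
      = C (2 * (a : ℤ)) * Spoly a (b + 1) (c + 1) + C (2 * (b : ℤ)) * Spoly (a + 1) b (c + 1)
        - C (2 * (c : ℤ)) * Spoly (a + 1) (b + 1) c := by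
  rcases a with _ | a <;> rcases b with _ | b <;> rcases c with _ | c <;>
    · simp only [Spoly, derivative_mul, derivative_pow, derivative_X_pow, derivative_one,
        derivative_add, derivative_sub, derivative_X, Nat.add_sub_cancel, pow_zero]
      push_cast
      simp only [map_add, map_mul, map_pow, map_sub, map_ofNat, map_one, map_zero]
      ring

lemma Lop_add (m : ℕ) (P Q : ℤ[X]) : Lop m (P + Q) = Lop m P + Lop m Q := by
  simp only [Lop, derivative_add]; ring

lemma Lop_sub (m : ℕ) (P Q : ℤ[X]) : Lop m (P - Q) = Lop m P - Lop m Q := by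
  simp only [Lop, derivative_sub]; ring

lemma Lop_mul_S (m : ℕ) (q : ℤ[X]) (a b c : ℕ) :
    Lop m (q * Spoly a b c)
      = ((3 * X - 1 + C (2 * (m : ℤ)) * X ^ 2) * q + (2 * X - 2 * X ^ 3) * derivative q)
            * Spoly a b c
        + q * (C (2 * (a : ℤ)) * Spoly a (b + 1) (c + 1)
            + C (2 * (b : ℤ)) * Spoly (a + 1) b (c + 1)
            - C (2 * (c : ℤ)) * Spoly (a + 1) (b + 1) c) := by
  unfold Lop
  rw [derivative_mul]
  linear_combination q * deriv_S a b c

lemma key (j d : ℕ) :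
    Lop (2 * (j + d) + 2) (Lop (2 * (j + d) + 1) (Spoly (j + 1) (j + d) d))
      = C (((2 * (j : ℤ) + 1) ^ 2)) * Spoly (j + 1) (j + d + 1) (d + 1)
        + C (2 * (2 * (j : ℤ) + 2) * (2 * (j : ℤ) + 3)) * Spoly (j + 2) (j + d + 1) d := by
  rw [show Spoly (j + 1) (j + d) d = 1 * Spoly (j + 1) (j + d) d from (one_mul _).symm]
  rw [Lop_mul_S, Lop_add, one_mul, Lop_sub, Lop_add, Lop_mul_S, Lop_mul_S, Lop_mul_S, Lop_mul_S]
  simp only [derivative_add, derivative_sub, derivative_mul, derivative_X_pow, derivative_one,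
    derivative_X, derivative_C, derivative_ofNat, Nat.add_sub_cancel, pow_one]
  simp only [Spoly, pow_add, pow_one]
  push_cast
  simp only [map_add, map_mul, map_pow, map_sub, map_ofNat, map_one, map_zero]
  ring

lemma V_eq_zero {n k : ℕ} (h : n < k) : V n k = 0 := by
  induction n generalizing k with
  | zero =>
    obtain ⟨k', rfl⟩ : ∃ k', k = k' + 1 := ⟨k - 1, by omega⟩
    rfl
  | succ n ih =>
    obtain ⟨k', rfl⟩ : ∃ k', k = k' + 1 := ⟨k - 1, by omega⟩
    show V n k' + (2 * ((k' : ℤ) + 1) + 1) ^ 2 * V n (k' + 1) = 0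
    rw [ih (by omega), ih (by omega)]
    ring

lemma Fpoly_eq (n : ℕ) :
    Fpoly n = ∑ j ∈ Finset.range (n + 1),
      C ((2 : ℤ) ^ j * ((2 * j + 1).factorial : ℤ) * V n j) * Spoly (j + 1) n (n - j) := by
  unfold Fpoly
  rw [Finset.mul_sum]
  refine Finset.sum_congr rfl fun j _ => ?_
  simp only [Spoly]
  ring

lemma Lop_C_mul (m : ℕ) (a : ℤ) (P : ℤ[X]) : Lop m (C a * P) = C a * Lop m P := by
  simp only [Lop, derivative_C_mul]; ring

lemma key' {j n : ℕ} (hj : j ≤ n) :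
    Lop (2 * n + 2) (Lop (2 * n + 1) (Spoly (j + 1) n (n - j)))
      = C (((2 * (j : ℤ) + 1) ^ 2)) * Spoly (j + 1) (n + 1) (n + 1 - j)
        + C (2 * (2 * (j : ℤ) + 2) * (2 * (j : ℤ) + 3)) * Spoly (j + 2) (n + 1) (n - j) := by
  obtain ⟨d, rfl⟩ : ∃ d, n = j + d := ⟨n - j, by omega⟩
  simp only [show j + d - j = d from by omega, show j + d + 1 - j = d + 1 from by omega]
  exact key j d

lemma main_alg (n : ℕ) : Lop (2 * n + 2) (Lop (2 * n + 1) (Fpoly n)) = Fpoly (n + 1) := by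
  have hfac : ∀ j : ℕ, ((2 * (j + 1) + 1).factorial : ℤ)
      = (2 * (j : ℤ) + 3) * (2 * (j : ℤ) + 2) * ((2 * j + 1).factorial : ℤ) := by
    intro j
    rw [show 2 * (j + 1) + 1 = (2 * j + 1) + 1 + 1 from by ring, Nat.factorial_succ,
      Nat.factorial_succ]
    push_cast; ring
  rw [Fpoly_eq, Fpoly_eq, Lop_sum, Lop_sum]
  have hterm : ∀ j ∈ Finset.range (n + 1),
      Lop (2 * n + 2) (Lop (2 * n + 1)
          (C ((2 : ℤ) ^ j * ((2 * j + 1).factorial : ℤ) * V n j) * Spoly (j + 1) n (n - j)))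
        = C ((2 : ℤ) ^ j * ((2 * j + 1).factorial : ℤ) * V n j * ((2 * (j : ℤ) + 1) ^ 2)) *
              Spoly (j + 1) (n + 1) (n + 1 - j)
          + C ((2 : ℤ) ^ j * ((2 * j + 1).factorial : ℤ) * V n j *
                (2 * (2 * (j : ℤ) + 2) * (2 * (j : ℤ) + 3))) *
              Spoly (j + 2) (n + 1) (n - j) := by
    intro j hj
    rw [Lop_C_mul, Lop_C_mul, key' (by simpa using Nat.lt_succ_iff.mp (Finset.mem_range.mp hj)),
      mul_add, ← mul_assoc, ← C_mul, ← mul_assoc, ← C_mul]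
  rw [Finset.sum_congr rfl hterm, Finset.sum_add_distrib]
  rw [Finset.sum_range_succ' (fun j => C ((2 : ℤ) ^ j * ((2 * j + 1).factorial : ℤ) * V n j *
        ((2 * (j : ℤ) + 1) ^ 2)) * Spoly (j + 1) (n + 1) (n + 1 - j)) n]
  rw [Finset.sum_range_succ (fun j => C ((2 : ℤ) ^ j * ((2 * j + 1).factorial : ℤ) * V n j *
        (2 * (2 * (j : ℤ) + 2) * (2 * (j : ℤ) + 3))) * Spoly (j + 2) (n + 1) (n - j)) n]
  rw [Finset.sum_range_succ (fun j => C ((2 : ℤ) ^ j * ((2 * (j : ℕ) + 1).factorial : ℤ) *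
        V (n + 1) j) * Spoly (j + 1) (n + 1) (n + 1 - j)) (n + 1)]
  rw [Finset.sum_range_succ' (fun j => C ((2 : ℤ) ^ j * ((2 * (j : ℕ) + 1).factorial : ℤ) *
        V (n + 1) j) * Spoly (j + 1) (n + 1) (n + 1 - j)) n]
  have hA0 : C ((2 : ℤ) ^ 0 * ((2 * 0 + 1).factorial : ℤ) * V n 0 * ((2 * ((0 : ℕ) : ℤ) + 1) ^ 2)) *
        Spoly (0 + 1) (n + 1) (n + 1 - 0)
      = C ((2 : ℤ) ^ 0 * ((2 * (0 : ℕ) + 1).factorial : ℤ) * V (n + 1) 0) *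
        Spoly (0 + 1) (n + 1) (n + 1 - 0) := by
    have hV0 : V (n + 1) 0 = V n 0 := rfl
    rw [hV0]; norm_num
  have hBn : C ((2 : ℤ) ^ n * ((2 * n + 1).factorial : ℤ) * V n n *
        (2 * (2 * (n : ℤ) + 2) * (2 * (n : ℤ) + 3))) * Spoly (n + 2) (n + 1) (n - n)
      = C ((2 : ℤ) ^ (n + 1) * ((2 * (n + 1 : ℕ) + 1).factorial : ℤ) * V (n + 1) (n + 1)) *
        Spoly ((n + 1) + 1) (n + 1) (n + 1 - (n + 1)) := by
    have hV1 : V (n + 1) (n + 1) = V n n + (2 * ((n : ℤ) + 1) + 1) ^ 2 * V n (n + 1) := rfl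
    have hV2 : V n (n + 1) = 0 := V_eq_zero (by omega)
    simp only [Nat.sub_self, hV1, hV2, hfac n]
    rw [show (n + 1) + 1 = n + 2 from rfl]
    congr 1
    rw [pow_succ]
    push_cast
    ring
  have h1 : (∑ j ∈ Finset.range n,
        C ((2 : ℤ) ^ (j + 1) * ((2 * (j + 1) + 1).factorial : ℤ) * V n (j + 1) *
          ((2 * ((j + 1 : ℕ) : ℤ) + 1) ^ 2)) * Spoly ((j + 1) + 1) (n + 1) (n + 1 - (j + 1)))
      + (∑ j ∈ Finset.range n,
        C ((2 : ℤ) ^ j * ((2 * j + 1).factorial : ℤ) * V n j *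
          (2 * (2 * (j : ℤ) + 2) * (2 * (j : ℤ) + 3))) * Spoly (j + 2) (n + 1) (n - j))
      = ∑ j ∈ Finset.range n,
        C ((2 : ℤ) ^ (j + 1) * ((2 * ((j + 1 : ℕ)) + 1).factorial : ℤ) * V (n + 1) (j + 1)) *
          Spoly ((j + 1) + 1) (n + 1) (n + 1 - (j + 1)) := by
    rw [← Finset.sum_add_distrib]
    refine Finset.sum_congr rfl fun j hj => ?_
    have hss : n + 1 - (j + 1) = n - j := by omega
    have hVr : V (n + 1) (j + 1) = V n j + (2 * ((j : ℤ) + 1) + 1) ^ 2 * V n (j + 1) := rfl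
    simp only [hss, show (j + 1) + 1 = j + 2 from rfl]
    rw [← add_mul, ← C_add]
    congr 1
    rw [hVr, hfac j, pow_succ]
    push_cast
    ring
  linear_combination h1 + hA0 + hBn

lemma QPoly_one : QPoly 1 = 2 * X := by
  have h : ∀ (σ : Equiv.Perm (Fin 1)) (ε : Fin 1 → Bool), sgnAltRuns 1 σ ε = 1 := by
    intro σ ε
    unfold sgnAltRuns
    rw [show (1 : ℕ) - 1 = 0 from rfl, show Finset.Icc 1 0 = (∅ : Finset ℕ) from
      Finset.Icc_eq_empty (by omega), Finset.filter_empty, Finset.card_empty]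
  unfold QPoly
  rw [Finset.sum_congr rfl (fun p _ => by rw [h p.1 p.2])]
  rw [Finset.sum_const, Finset.card_univ]
  simp only [Fintype.card_prod, Fintype.card_perm, Fintype.card_fun, Fintype.card_fin,
    Fintype.card_bool, Nat.factorial, pow_one, nsmul_eq_mul]
  norm_num

lemma base_case : QPoly 3 = 2 * Fpoly 1 := by
  rw [show (3 : ℕ) = 2 + 1 from rfl, QPoly_rec 2 (by omega),
    show (2 : ℕ) = 1 + 1 from rfl, QPoly_rec 1 (by omega), QPoly_one]
  have hV0 : V 1 0 = 1 := rfl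
  have hV1 : V 1 1 = 1 := by
    show V 0 0 + (2 * ((0 : ℤ) + 1) + 1) ^ 2 * V 0 1 = 1
    show (1 : ℤ) + (2 * ((0 : ℤ) + 1) + 1) ^ 2 * 0 = 1
    ring
  have hf1 : ((2 * 0 + 1).factorial : ℤ) = 1 := by norm_num [Nat.factorial]
  have hf2 : ((2 * 1 + 1).factorial : ℤ) = 6 := by
    rw [show 2 * 1 + 1 = 3 from rfl]
    norm_num [Nat.factorial]
  unfold Fpoly
  rw [Finset.sum_range_succ, Finset.sum_range_succ, Finset.range_zero, Finset.sum_empty]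
  rw [hV0, hV1, hf1, hf2]
  simp only [Lop, derivative_add, derivative_sub, derivative_mul, derivative_ofNat,
    derivative_X, derivative_one, derivative_C, derivative_X_pow, derivative_pow, pow_zero,
    pow_one, Nat.sub_self, Nat.sub_zero]
  push_cast
  simp only [map_add, map_mul, map_pow, map_sub, map_ofNat, map_one, map_zero]
  ring

lemma Lop_two_mul (m : ℕ) (P : ℤ[X]) : Lop m (2 * P) = 2 * Lop m P := by
  simp only [Lop, derivative_mul, derivative_ofNat]
  ring

lemma QPoly_closed (n : ℕ) (hn : 1 ≤ n) : QPoly (2 * n + 1) = 2 * Fpoly n := by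
  induction n, hn using Nat.le_induction with
  | base => exact base_case
  | succ n hn ih =>
    have h1 : QPoly (2 * (n + 1) + 1) = Lop (2 * n + 2) (QPoly (2 * n + 2)) := by
      rw [show 2 * (n + 1) + 1 = (2 * n + 2) + 1 from by ring]
      exact QPoly_rec (2 * n + 2) (by omega)
    have h2 : QPoly (2 * n + 2) = Lop (2 * n + 1) (QPoly (2 * n + 1)) := by
      rw [show 2 * n + 2 = (2 * n + 1) + 1 from by ring]
      exact QPoly_rec (2 * n + 1) (by omega)
    rw [h1, h2, ih, Lop_two_mul, Lop_two_mul, main_alg]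

/-- For `n ≥ 1`, `R̂_{2n+1}(x) = x(1+x)^n Σ_{j=0}^n 2^j (2j+1)! V(n,j) x^j (1-x)^{n-j}`. -/
theorem stmt10 (n : ℕ) (hn : 1 ≤ n) :
    RhatPoly (2 * n + 1) =
      Polynomial.X * (1 + Polynomial.X) ^ n *
        ∑ j ∈ Finset.range (n + 1),
          Polynomial.C ((2 : ℤ) ^ j * ((2 * j + 1).factorial : ℤ) * V n j) *
            Polynomial.X ^ j * (1 - Polynomial.X) ^ (n - j) := by
  have h1 := QPoly_eq (2 * n + 1) (by omega)
  have h2 := QPoly_closed n hn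
  have : (2 : ℤ[X]) * RhatPoly (2 * n + 1) = 2 * Fpoly n := by rw [← h1, h2]
  have h3 := mul_left_cancel₀ (by norm_num : (2 : ℤ[X]) ≠ 0) this
  rw [h3]; rfl
end

section
/- For every integer n ≥ 1 and every real number θ with cos θ ≠ 0, the (2n−1)-st derivative of the tangent function at θ equals Σ_{j=1}^{n} (−4)^{n−j} (2j−1)! U(n,j) (1 + tan²θ)^j. -/
/-!
Since `tan' = 1 + tan²`, every derivative of `tan` is a polynomial in `tan`: if `f = q ∘ tan` then
`f' = ((1 + X²) q') ∘ tan`. On the powers `P^j` of `P = 1 + X²` this operator acts by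
`P^j ↦ 2j X P^j`, so applying it twice gives `P^j ↦ 2j(2j+1) P^(j+1) - 4j² P^j`. Hence the odd
derivatives of `tan` are polynomials in `P`, and the coefficients obey the recurrence of `U`
twisted by the factors `(-4)^(n-j) (2j-1)!`.
-/

open Finset

/-- The central factorial numbers of even indices `U(n,k)`, defined by the recurrence
`U(n,k) = U(n-1,k-1) + k^2 * U(n-1,k)` with `U(1,1) = 1` and `U(1,k) = 0` for `k ≠ 1`. -/
def U : ℕ → ℕ → ℤ
  | 0, _ => 0
  | 1, k => if k = 1 then 1 else 0
  | _ + 2, 0 => 0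
  | n + 2, k + 1 => U (n + 1) k + ((k : ℤ) + 1) ^ 2 * U (n + 1) (k + 1)

open Polynomial

lemma U_zero_right : ∀ n, U n 0 = 0
  | 0 | 1 | _ + 2 => rfl

lemma U_eq_zero_of_lt : ∀ {n k : ℕ}, n < k → U n k = 0
  | 0, _, _ => rfl
  | 1, k, h => by simp [U, show k ≠ 1 by omega]
  | n + 2, k + 1, h => by
    rw [U, U_eq_zero_of_lt (by omega : n + 1 < k), U_eq_zero_of_lt (by omega : n + 1 < k + 1)]
    ring

lemma factorial_two_mul_add_one_sub_one {j : ℕ} (hj : j ≠ 0) :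
    (2 * (j + 1) - 1).factorial = (2 * j + 1) * (2 * j) * (2 * j - 1).factorial := by
  obtain ⟨k, rfl⟩ := Nat.exists_eq_add_one_of_ne_zero hj
  rw [show 2 * (k + 1 + 1) - 1 = 2 * k + 1 + 1 + 1 by omega,
    show 2 * (k + 1) - 1 = 2 * k + 1 by omega, Nat.factorial_succ, Nat.factorial_succ]
  ring

noncomputable def tanCoeff (n j : ℕ) : ℝ :=
  (-4 : ℝ) ^ (n - j) * ((2 * j - 1).factorial : ℝ) * (U n j : ℝ)

lemma tanCoeff_zero_right (n : ℕ) : tanCoeff n 0 = 0 := by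
  simp [tanCoeff, U_zero_right]

lemma tanCoeff_eq_zero_of_lt {n j : ℕ} (h : n < j) : tanCoeff n j = 0 := by
  simp [tanCoeff, U_eq_zero_of_lt h]

lemma tanCoeff_succ_succ (n j : ℕ) :
    tanCoeff (n + 2) (j + 1) =
      2 * j * (2 * j + 1) * tanCoeff (n + 1) j - 4 * ((j : ℝ) + 1) ^ 2 * tanCoeff (n + 1) (j + 1) := by
  have hpow : (-4 : ℝ) ^ (n + 1 - j) * U (n + 1) (j + 1) =
      -4 * (-4 : ℝ) ^ (n - j) * U (n + 1) (j + 1) := by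
    rcases le_or_gt j n with hj | hj
    · rw [Nat.sub_add_comm hj, pow_succ]
      ring
    · simp [U_eq_zero_of_lt (by omega : n + 1 < j + 1)]
  have hfact : ((2 * (j + 1) - 1).factorial : ℝ) * U (n + 1) j =
      (2 * j + 1) * (2 * j) * (2 * j - 1).factorial * U (n + 1) j := by
    rcases eq_or_ne j 0 with rfl | hj
    · simp [U_zero_right]
    · rw [factorial_two_mul_add_one_sub_one hj]
      push_cast
      ring
  simp only [tanCoeff, U, Nat.add_sub_add_right]
  push_cast
  linear_combination (-4 : ℝ) ^ (n + 1 - j) * hfact +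
    ((2 * (j + 1) - 1).factorial : ℝ) * ((j : ℝ) + 1) ^ 2 * hpow

lemma sum_range_succ_shift_of_eq_zero {M : Type*} [AddCommMonoid M] (g : ℕ → M) (n : ℕ)
    (h0 : g 0 = 0) (hn : g (n + 1) = 0) :
    ∑ j ∈ range (n + 1), g (j + 1) = ∑ j ∈ range (n + 1), g j := by
  simpa [h0, hn] using (sum_range_succ' g (n + 1)).symm.trans (sum_range_succ g (n + 1))

/-- `q ↦ (1 + X²) q'`, the action of `d/dθ` on `θ ↦ q(tan θ)`. -/
noncomputable def tanDeriv : ℝ[X] →ₗ[ℝ] ℝ[X] :=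
  LinearMap.mulLeft ℝ (1 + X ^ 2) ∘ₗ derivative

lemma tanDeriv_apply (q : ℝ[X]) : tanDeriv q = (1 + X ^ 2) * derivative q := rfl

lemma hasDerivAt_eval_tan (q : ℝ[X]) {θ : ℝ} (h : Real.cos θ ≠ 0) :
    HasDerivAt (fun x => q.eval (Real.tan x)) ((tanDeriv q).eval (Real.tan θ)) θ := by
  have h_tan' : 1 / Real.cos θ ^ 2 = 1 + Real.tan θ ^ 2 := by
    rw [one_div, ← Real.inv_one_add_tan_sq h, inv_inv]
  have h_deriv : HasDerivAt (fun x => q.eval (Real.tan x))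
      ((derivative q).eval (Real.tan θ) * (1 / Real.cos θ ^ 2)) θ :=
    (q.hasDerivAt (Real.tan θ)).comp θ (Real.hasDerivAt_tan h)
  simpa [h_tan', tanDeriv_apply, mul_comm] using h_deriv

lemma iteratedDeriv_tan (m : ℕ) {θ : ℝ} (h : Real.cos θ ≠ 0) :
    iteratedDeriv m Real.tan θ = (tanDeriv^[m] X).eval (Real.tan θ) := by
  induction m generalizing θ with
  | zero => simp
  | succ m ih =>
    have h_nhds : iteratedDeriv m Real.tan =ᶠ[nhds θ] fun x => (tanDeriv^[m] X).eval (Real.tan x) :=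
      Filter.eventuallyEq_of_mem ((isOpen_ne.preimage Real.continuous_cos).mem_nhds h)
        fun x hx => ih hx
    rw [iteratedDeriv_succ, h_nhds.deriv_eq, (hasDerivAt_eval_tan _ h).deriv,
      Function.iterate_succ_apply']

lemma tanDeriv_X_mul (q : ℝ[X]) : tanDeriv (X * q) = (1 + X ^ 2) * q + X * tanDeriv q := by
  simp only [tanDeriv_apply, derivative_mul, derivative_X]
  ring

lemma tanDeriv_one_add_sq_pow (j : ℕ) :
    tanDeriv ((1 + X ^ 2) ^ j) = (2 * j : ℝ) • (X * (1 + X ^ 2) ^ j) := by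
  rcases j with _ | j
  · simp [tanDeriv_apply]
  · rw [tanDeriv_apply, derivative_pow, Nat.add_sub_cancel, smul_eq_C_mul]
    simp only [derivative_add, derivative_one, derivative_X_pow]
    push_cast
    simp only [map_add, map_mul, map_ofNat, map_natCast, map_one]
    ring

lemma tanDeriv_tanDeriv_one_add_sq_pow (j : ℕ) :
    tanDeriv (tanDeriv ((1 + X ^ 2) ^ j)) =
      (2 * j * (2 * j + 1) : ℝ) • (1 + X ^ 2) ^ (j + 1) - (4 * j ^ 2 : ℝ) • (1 + X ^ 2) ^ j := by
  rw [tanDeriv_one_add_sq_pow, map_smul, tanDeriv_X_mul, tanDeriv_one_add_sq_pow]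
  simp only [smul_eq_C_mul, map_add, map_mul, map_ofNat, map_natCast, map_one, map_pow]
  ring

lemma tanDeriv_iterate_two_mul_add_one_X (n : ℕ) :
    tanDeriv^[2 * n + 1] X = ∑ j ∈ range (n + 2), tanCoeff (n + 1) j • (1 + X ^ 2) ^ j := by
  induction n with
  | zero => simp [tanDeriv_apply, tanCoeff, U]
  | succ n ih =>
    have h_shift := sum_range_succ_shift_of_eq_zero
      (fun j => (4 * (j : ℝ) ^ 2 * tanCoeff (n + 1) j) • (1 + X ^ 2 : ℝ[X]) ^ j) (n + 1)
      (by simp) (by simp [tanCoeff_eq_zero_of_lt (by omega : n + 1 < n + 1 + 1)])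
    push_cast at h_shift
    rw [show 2 * (n + 1) + 1 = 2 + (2 * n + 1) by ring, Function.iterate_add_apply, ih]
    simp only [Function.iterate_succ, Function.iterate_zero, Function.comp_apply, id, map_sum,
      map_smul, tanDeriv_tanDeriv_one_add_sq_pow]
    rw [sum_range_succ' _ (n + 2), tanCoeff_zero_right, zero_smul, add_zero]
    simp only [tanCoeff_succ_succ, sub_smul, smul_sub, smul_smul, sum_sub_distrib]
    rw [h_shift]
    simp only [mul_comm]

/-- For `n ≥ 1` and `cos θ ≠ 0`, the `(2n-1)`-st derivative of `tan` at `θ` equals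
`Σ_{j=1}^n (-4)^{n-j} (2j-1)! U(n,j) (1 + tan² θ)^j`. -/
theorem stmt11 (n : ℕ) (hn : 1 ≤ n) (θ : ℝ) (h : Real.cos θ ≠ 0) :
    iteratedDeriv (2 * n - 1) Real.tan θ =
      ∑ j ∈ Finset.Icc 1 n,
        (-4 : ℝ) ^ (n - j) * ((2 * j - 1).factorial : ℝ) * (U n j : ℝ) *
          (1 + Real.tan θ ^ 2) ^ j := by
  obtain ⟨m, rfl⟩ := Nat.exists_eq_add_of_le' hn
  rw [show 2 * (m + 1) - 1 = 2 * m + 1 by omega, iteratedDeriv_tan _ h,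
    tanDeriv_iterate_two_mul_add_one_X, eval_finsetSum, range_eq_Ico,
    sum_eq_sum_Ico_succ_bot (by omega), tanCoeff_zero_right, ← Ico_add_one_right_eq_Icc]
  simp only [eval_smul, eval_pow, eval_add, eval_one, eval_X, smul_eq_mul, zero_mul, zero_add,
    tanCoeff]
  rfl
end

section
/- For every integer n ≥ 1 and every real number θ with cos θ ≠ 0, the (2n)-th derivative of the tangent function at θ equals tan θ · Σ_{j=1}^{n} (−4)^{n−j} (2j)! U(n,j) (1 + tan²θ)^j. -/
open Finset

noncomputable def cc (n j : ℕ) : ℝ :=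
  (-4 : ℝ) ^ (n - j) * ((2 * j).factorial : ℝ) * (U n j : ℝ)

lemma U_zero (n : ℕ) : U n 0 = 0 := by
  match n with
  | 0 => rfl
  | 1 => rfl
  | n + 2 => rfl

lemma U_gt : ∀ n k, n < k → U n k = 0
  | 0, _, _ => rfl
  | 1, k, h => by
      have hk : k ≠ 1 := by omega
      simp [U, hk]
  | n + 2, 0, h => by omega
  | n + 2, k + 1, h => by
      have h1 : U (n + 1) k = 0 := U_gt (n + 1) k (by omega)
      have h2 : U (n + 1) (k + 1) = 0 := U_gt (n + 1) (k + 1) (by omega)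
      simp [U, h1, h2]

lemma U_rec (n k : ℕ) (hn : 1 ≤ n) :
    U (n + 1) (k + 1) = U n k + ((k : ℤ) + 1) ^ 2 * U n (k + 1) := by
  obtain ⟨m, rfl⟩ : ∃ m, n = m + 1 := ⟨n - 1, by omega⟩
  rfl

lemma cc_zero (n : ℕ) : cc n 0 = 0 := by simp [cc, U_zero]

lemma cc_top (n : ℕ) : cc n (n + 1) = 0 := by
  simp [cc, U_gt n (n + 1) (Nat.lt_succ_self n)]

lemma fact_step (i : ℕ) :
    ((2 * (i + 1)).factorial : ℝ) = (2 * i + 1) * (2 * i + 2) * ((2 * i).factorial : ℝ) := by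
  have : 2 * (i + 1) = (2 * i + 1) + 1 := by ring
  rw [this, Nat.factorial_succ, Nat.factorial_succ]
  push_cast
  ring

lemma crec (n i : ℕ) (hn : 1 ≤ n) (hi : i ≤ n) :
    cc (n + 1) (i + 1) =
      (2 * (i : ℝ) + 1) * (2 * (i : ℝ) + 2) * cc n i - 4 * ((i : ℝ) + 1) ^ 2 * cc n (i + 1) := by
  have hU := U_rec n i hn
  rcases Nat.lt_or_ge i n with hlt | hge
  · have hs1 : n + 1 - (i + 1) = n - i := by omega
    have hs2 : n - i = (n - (i + 1)) + 1 := by omega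
    simp only [cc, hU, hs1, hs2, fact_step i, pow_succ]
    push_cast
    ring
  · have heq : i = n := le_antisymm hi hge
    subst heq
    have hz : U i (i + 1) = 0 := U_gt i (i + 1) (Nat.lt_succ_self i)
    have hs1 : i + 1 - (i + 1) = 0 := by omega
    have hs2 : i - i = 0 := by omega
    have hs3 : i - (i + 1) = 0 := by omega
    simp only [cc, hU, hs1, hs2, hs3, hz, fact_step i]
    push_cast
    ring

lemma one_div_cos_sq {x : ℝ} (h : Real.cos x ≠ 0) :
    1 / Real.cos x ^ 2 = 1 + Real.tan x ^ 2 := by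
  rw [Real.tan_eq_sin_div_cos]
  field_simp
  exact (Real.cos_sq_add_sin_sq x).symm

lemma hasDerivAt_tan' {x : ℝ} (h : Real.cos x ≠ 0) :
    HasDerivAt Real.tan (1 + Real.tan x ^ 2) x := by
  simpa [one_div_cos_sq h] using Real.hasDerivAt_tan h

lemma hasDerivAt_s_pow (j : ℕ) {x : ℝ} (h : Real.cos x ≠ 0) :
    HasDerivAt (fun y => (1 + Real.tan y ^ 2) ^ j)
      (2 * (j : ℝ) * Real.tan x * (1 + Real.tan x ^ 2) ^ j) x := by
  have ht := hasDerivAt_tan' h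
  have h1 : HasDerivAt (fun y => 1 + Real.tan y ^ 2)
      (2 * Real.tan x * (1 + Real.tan x ^ 2)) x := by
    have := (ht.pow 2).const_add 1
    simpa using this
  have h2 := h1.fun_pow j
  cases j with
  | zero => simpa using h2
  | succ m =>
    refine h2.congr_deriv ?_
    simp only [Nat.succ_sub_one]
    push_cast
    ring

lemma hasDerivAt_F (n : ℕ) {x : ℝ} (h : Real.cos x ≠ 0) :
    HasDerivAt
      (fun y => Real.tan y * ∑ i ∈ range n, cc n (i + 1) * (1 + Real.tan y ^ 2) ^ (i + 1))
      (∑ i ∈ range n, cc n (i + 1) *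
        ((2 * (i : ℝ) + 3) * (1 + Real.tan x ^ 2) ^ (i + 2)
          - (2 * (i : ℝ) + 2) * (1 + Real.tan x ^ 2) ^ (i + 1))) x := by
  have ht := hasDerivAt_tan' h
  have hs : HasDerivAt
      (fun y => ∑ i ∈ range n, cc n (i + 1) * (1 + Real.tan y ^ 2) ^ (i + 1))
      (∑ i ∈ range n, cc n (i + 1) *
        (2 * ((i : ℝ) + 1) * Real.tan x * (1 + Real.tan x ^ 2) ^ (i + 1))) x := by
    apply HasDerivAt.fun_sum
    intro i _
    have := (hasDerivAt_s_pow (i + 1) h).const_mul (cc n (i + 1))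
    refine this.congr_deriv ?_
    push_cast
    ring
  have hmul := ht.fun_mul hs
  refine hmul.congr_deriv ?_
  rw [Finset.mul_sum, Finset.mul_sum, ← Finset.sum_add_distrib]
  apply Finset.sum_congr rfl
  intro i _
  ring

lemma hasDerivAt_G (n : ℕ) {x : ℝ} (h : Real.cos x ≠ 0) :
    HasDerivAt
      (fun y => ∑ i ∈ range n, cc n (i + 1) *
        ((2 * (i : ℝ) + 3) * (1 + Real.tan y ^ 2) ^ (i + 2)
          - (2 * (i : ℝ) + 2) * (1 + Real.tan y ^ 2) ^ (i + 1)))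
      (Real.tan x * ∑ i ∈ range n, cc n (i + 1) *
        ((2 * (i : ℝ) + 3) * (2 * (i : ℝ) + 4) * (1 + Real.tan x ^ 2) ^ (i + 2)
          - 4 * ((i : ℝ) + 1) ^ 2 * (1 + Real.tan x ^ 2) ^ (i + 1))) x := by
  have hsum : HasDerivAt
      (fun y => ∑ i ∈ range n, cc n (i + 1) *
        ((2 * (i : ℝ) + 3) * (1 + Real.tan y ^ 2) ^ (i + 2)
          - (2 * (i : ℝ) + 2) * (1 + Real.tan y ^ 2) ^ (i + 1)))
      (∑ i ∈ range n, cc n (i + 1) *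
        ((2 * (i : ℝ) + 3) * (2 * ((i : ℝ) + 2) * Real.tan x * (1 + Real.tan x ^ 2) ^ (i + 2))
          - (2 * (i : ℝ) + 2) *
            (2 * ((i : ℝ) + 1) * Real.tan x * (1 + Real.tan x ^ 2) ^ (i + 1)))) x := by
    apply HasDerivAt.fun_sum
    intro i _
    have h1 := (hasDerivAt_s_pow (i + 2) h).const_mul (2 * (i : ℝ) + 3)
    have h2 := (hasDerivAt_s_pow (i + 1) h).const_mul (2 * (i : ℝ) + 2)
    have := (h1.sub h2).const_mul (cc n (i + 1))
    refine this.congr_deriv ?_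
    push_cast
    ring
  refine hsum.congr_deriv ?_
  rw [Finset.mul_sum]
  apply Finset.sum_congr rfl
  intro i _
  ring

lemma sum_step (n : ℕ) (hn : 1 ≤ n) (s : ℝ) :
    ∑ i ∈ range (n + 1), cc (n + 1) (i + 1) * s ^ (i + 1)
      = ∑ i ∈ range n, cc n (i + 1) *
          ((2 * (i : ℝ) + 3) * (2 * (i : ℝ) + 4) * s ^ (i + 2)
            - 4 * ((i : ℝ) + 1) ^ 2 * s ^ (i + 1)) := by
  have h1 : ∀ i ∈ range (n + 1), cc (n + 1) (i + 1) * s ^ (i + 1)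
      = (2 * (i : ℝ) + 1) * (2 * (i : ℝ) + 2) * cc n i * s ^ (i + 1)
        - 4 * ((i : ℝ) + 1) ^ 2 * cc n (i + 1) * s ^ (i + 1) := by
    intro i hi
    rw [crec n i hn (Nat.lt_succ_iff.mp (mem_range.mp hi))]
    ring
  rw [Finset.sum_congr rfl h1, Finset.sum_sub_distrib]
  have hA : ∑ i ∈ range (n + 1), (2 * (i : ℝ) + 1) * (2 * (i : ℝ) + 2) * cc n i * s ^ (i + 1)
      = ∑ i ∈ range n,
          (2 * (i : ℝ) + 3) * (2 * (i : ℝ) + 4) * cc n (i + 1) * s ^ (i + 2) := by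
    rw [Finset.sum_range_succ']
    simp only [cc_zero, mul_zero, zero_mul, add_zero]
    apply Finset.sum_congr rfl
    intro i _
    push_cast
    ring
  have hB : ∑ i ∈ range (n + 1), 4 * ((i : ℝ) + 1) ^ 2 * cc n (i + 1) * s ^ (i + 1)
      = ∑ i ∈ range n, 4 * ((i : ℝ) + 1) ^ 2 * cc n (i + 1) * s ^ (i + 1) := by
    rw [Finset.sum_range_succ, cc_top]
    simp
  rw [hA, hB, ← Finset.sum_sub_distrib]
  apply Finset.sum_congr rfl
  intro i _
  ring

lemma isOpen_cos_ne : IsOpen {x : ℝ | Real.cos x ≠ 0} :=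
  isOpen_ne.preimage Real.continuous_cos

lemma main_aux : ∀ n : ℕ, 1 ≤ n → ∀ θ : ℝ, Real.cos θ ≠ 0 →
    iteratedDeriv (2 * n) Real.tan θ
      = Real.tan θ * ∑ i ∈ range n, cc n (i + 1) * (1 + Real.tan θ ^ 2) ^ (i + 1) := by
  intro n
  induction n with
  | zero => omega
  | succ n ih =>
    intro _ θ hθ
    rcases Nat.eq_zero_or_pos n with rfl | hn
    · -- base case: second derivative of tan
      rw [show 2 * 1 = 1 + 1 from rfl, iteratedDeriv_succ, iteratedDeriv_one]
      have hev : deriv Real.tan =ᶠ[nhds θ] fun x => 1 + Real.tan x ^ 2 := by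
        filter_upwards [isOpen_cos_ne.mem_nhds hθ] with x hx
        rw [Real.deriv_tan, one_div_cos_sq hx]
      rw [hev.deriv_eq]
      have h1 : HasDerivAt (fun x : ℝ => 1 + Real.tan x ^ 2)
          (2 * Real.tan θ * (1 + Real.tan θ ^ 2)) θ := by
        have := hasDerivAt_s_pow 1 hθ
        simpa using this
      rw [h1.deriv]
      have hU11 : U 1 1 = 1 := rfl
      simp [cc, hU11]
      ring
    · -- inductive step
      rw [show 2 * (n + 1) = 2 * n + 1 + 1 by ring, iteratedDeriv_succ, iteratedDeriv_succ]
      have hmem := isOpen_cos_ne.mem_nhds hθ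
      have hev1 : iteratedDeriv (2 * n) Real.tan =ᶠ[nhds θ]
          fun x => Real.tan x * ∑ i ∈ range n, cc n (i + 1) * (1 + Real.tan x ^ 2) ^ (i + 1) := by
        filter_upwards [hmem] with x hx
        exact ih hn x hx
      have hev2 : deriv (iteratedDeriv (2 * n) Real.tan) =ᶠ[nhds θ]
          fun x => ∑ i ∈ range n, cc n (i + 1) *
            ((2 * (i : ℝ) + 3) * (1 + Real.tan x ^ 2) ^ (i + 2)
              - (2 * (i : ℝ) + 2) * (1 + Real.tan x ^ 2) ^ (i + 1)) := by
        filter_upwards [hev1.deriv, hmem] with x hx1 hx2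
        rw [hx1, (hasDerivAt_F n hx2).deriv]
      rw [hev2.deriv_eq, (hasDerivAt_G n hθ).deriv, sum_step n hn (1 + Real.tan θ ^ 2)]

/-- For `n ≥ 1` and `cos θ ≠ 0`, the `(2n)`-th derivative of `tan` at `θ` equals
`tan θ · Σ_{j=1}^n (-4)^{n-j} (2j)! U(n,j) (1 + tan² θ)^j`. -/
theorem stmt12 (n : ℕ) (hn : 1 ≤ n) (θ : ℝ) (h : Real.cos θ ≠ 0) :
    iteratedDeriv (2 * n) Real.tan θ =
      Real.tan θ *
        ∑ j ∈ Finset.Icc 1 n,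
          (-4 : ℝ) ^ (n - j) * ((2 * j).factorial : ℝ) * (U n j : ℝ) *
            (1 + Real.tan θ ^ 2) ^ j := by
  rw [main_aux n hn θ h]
  congr 1
  rw [← Finset.Ico_add_one_right_eq_Icc, Finset.sum_Ico_eq_sum_range]
  apply Finset.sum_congr (by norm_num)
  intro i _
  rw [Nat.add_comm 1 i]
  rfl
end
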